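/- Let H = 𝒫 ⋊ 𝓗 ⋉ 𝒫^op be the double crossed product bialgebroid of a Hopf algebra 𝓗 acting on a module algebra 𝒫, with T(P⋊h⋉Q) = S(h⁽³⁾)(Q) ⋊ S(h⁽²⁾) ⋉ S̃_δ(h⁽¹⁾)(P). Then for every 𝔥 = P⋊h⋉Q ∈ H, T(𝔥⁽¹⁾)⁽¹⁾𝔥⁽²⁾ ⊗_𝒫 T(𝔥⁽¹⁾)⁽²⁾ = 1_H ⊗_𝒫 T(𝔥). -/

import Mathlib

/-!
Write `𝔥 = P ⋊ h ⋉ Q`. The coproduct `D.Δ 𝔥` is only known modulo the relations of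
`H ⊗_𝒫 H`, so one first shows that `x ⊗ y ↦ Δ(T x)(y ⊗ 1)` descends to `H ⊗_𝒫 H`. This follows
from the Takeuchi property of `Δ` together with `T(β(r) x) = T(x) α(r)`; the latter rests on
the module-algebra property of `ρ`, which is itself a consequence of associativity of `H`.

On the representative `(P ⋊ h⁽¹⁾ ⋉ 1) ⊗ (1 ⋊ h⁽²⁾ ⋉ Q)` the identity is a Sweedler computation:
`T(P ⋊ h⁽¹⁾ ⋉ 1) = 1 ⋊ S(h⁽²⁾) ⋉ S̃_δ(h⁽¹⁾)(P)`, the antipode is anti-comultiplicative, and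
`(1 ⋊ S(h⁽³⁾) ⋉ 1)(1 ⋊ h⁽⁴⁾ ⋉ Q) = β(S(h⁽³⁾)(Q))`. Moving this `β` across `⊗_𝒫` as an `α`
leaves `1 ⊗ (S(h⁽³⁾)(Q) ⋊ S(h⁽²⁾) ⋉ S̃_δ(h⁽¹⁾)(P)) = 1 ⊗ T(𝔥)`.
-/

open TensorProduct

noncomputable section

/-- The data of a (pre-)bialgebroid: total algebra `H`, base algebra `R`,
source map `α` (algebra map), target map `β` (anti-algebra map), a linear lift
`Δ : H → H ⊗[k] H` of the coproduct, and the counit `ε`. -/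
structure PreBialgebroid (k H R : Type) [Field k] [Ring H] [Algebra k H]
    [Ring R] [Algebra k R] where
  α : R →ₐ[k] H
  β : R →ₗ[k] H
  β_one : β 1 = 1
  β_mul : ∀ a b : R, β (a * b) = β b * β a
  αβ_comm : ∀ a b : R, α a * β b = β b * α a
  Δ : H →ₗ[k] H ⊗[k] H
  ε : H →ₗ[k] R

namespace PreBialgebroid

variable {k H R : Type} [Field k] [Ring H] [Algebra k H] [Ring R] [Algebra k R]
variable (D : PreBialgebroid k H R)

/-- The submodule of `H ⊗[k] H` by which one divides to obtain `H ⊗_R H`. -/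
def rel2 : Submodule k (H ⊗[k] H) :=
  Submodule.span k {z | ∃ (r : R) (x y : H), z = (D.β r * x) ⊗ₜ[k] y - x ⊗ₜ[k] (D.α r * y)}

/-- The projection `H ⊗[k] H → H ⊗_R H`. -/
def π2 : H ⊗[k] H →ₗ[k] (H ⊗[k] H) ⧸ D.rel2 := D.rel2.mkQ

/-- Relations for the triple tensor product `H ⊗_R H ⊗_R H` (right associated). -/
def rel3 : Submodule k (H ⊗[k] (H ⊗[k] H)) :=
  Submodule.span k {z |
    (∃ (r : R) (x y w : H), z = (D.β r * x) ⊗ₜ[k] (y ⊗ₜ[k] w) - x ⊗ₜ[k] ((D.α r * y) ⊗ₜ[k] w)) ∨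
    (∃ (r : R) (x y w : H), z = x ⊗ₜ[k] ((D.β r * y) ⊗ₜ[k] w) - x ⊗ₜ[k] (y ⊗ₜ[k] (D.α r * w)))}

def π3 : H ⊗[k] (H ⊗[k] H) →ₗ[k] (H ⊗[k] (H ⊗[k] H)) ⧸ D.rel3 := D.rel3.mkQ

/-- For a linear map `f : H → H`, the map `x ⊗ y ↦ f x * y`. -/
def mulL (f : H →ₗ[k] H) : H ⊗[k] H →ₗ[k] H :=
  TensorProduct.lift
    (LinearMap.mk₂ k (fun x y => f x * y)
      (by intro x x' y; simp [map_add, add_mul])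
      (by intro c x y; simp [map_smul, smul_mul_assoc])
      (by intro x y y'; simp [mul_add])
      (by intro c x y; simp [mul_smul_comm]))

/-- For a linear map `f : H → H`, the map `x ⊗ y ↦ f y * x`. -/
def mulR (f : H →ₗ[k] H) : H ⊗[k] H →ₗ[k] H :=
  TensorProduct.lift
    (LinearMap.mk₂ k (fun x y => f y * x)
      (by intro x x' y; simp [mul_add])
      (by intro c x y; simp [mul_smul_comm])
      (by intro x y y'; simp [map_add, add_mul])
      (by intro c x y; simp [map_smul, smul_mul_assoc]))

/-- The (lift of the) Connes–Moscovici cyclic operator in degree 2: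
`x ⊗ y ↦ Δ(T x) · (y ⊗ 1)`. -/
def tau2 (T : H →ₗ[k] H) : H ⊗[k] H →ₗ[k] H ⊗[k] H :=
  TensorProduct.lift
    (LinearMap.mk₂ k (fun x y => D.Δ (T x) * (y ⊗ₜ[k] (1 : H)))
      (by intro x x' y; simp [map_add, add_mul])
      (by intro c x y; simp [map_smul, smul_mul_assoc])
      (by intro x y y'; simp [add_tmul, mul_add])
      (by intro c x y; simp [← TensorProduct.smul_tmul', mul_smul_comm]))

/-- The bialgebroid axioms, stated for the chosen linear lift `Δ` of the coproduct
modulo the relations defining `H ⊗_R H`. -/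
structure IsBialgebroid : Prop where
  Δ_one : D.π2 (D.Δ 1) = D.π2 ((1 : H) ⊗ₜ[k] (1 : H))
  coassoc : ∀ h : H,
    D.π3 ((TensorProduct.assoc k H H H) ((D.Δ.rTensor H) (D.Δ h))) =
      D.π3 ((D.Δ.lTensor H) (D.Δ h))
  Δ_cp3 : ∀ (h : H) (r : R),
    D.π2 (D.Δ h * (D.β r ⊗ₜ[k] (1 : H) - (1 : H) ⊗ₜ[k] D.α r)) = 0
  Δ_mul : ∀ a b : H, D.π2 (D.Δ (a * b)) = D.π2 (D.Δ a * D.Δ b)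
  Δ_left : ∀ (r : R) (h : H),
    D.π2 (D.Δ (D.α r * h)) = D.π2 ((D.α r ⊗ₜ[k] (1 : H)) * D.Δ h)
  Δ_right : ∀ (r : R) (h : H),
    D.π2 (D.Δ (D.β r * h)) = D.π2 (((1 : H) ⊗ₜ[k] D.β r) * D.Δ h)
  ε_one : D.ε 1 = 1
  ε_left : ∀ (r : R) (h : H), D.ε (D.α r * h) = r * D.ε h
  ε_right : ∀ (r : R) (h : H), D.ε (D.β r * h) = D.ε h * r
  counit_l : ∀ h : H, mulL (D.α.toLinearMap ∘ₗ D.ε) (D.Δ h) = h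
  counit_r : ∀ h : H, mulR (D.β ∘ₗ D.ε) (D.Δ h) = h

/-- The para-Hopf algebroid axioms for a para-antipode `T`. -/
structure IsParaHopf (T : H →ₗ[k] H) : Prop where
  bialgebroid : D.IsBialgebroid
  T_one : T 1 = 1
  T_antimul : ∀ a b : H, T (a * b) = T b * T a
  PH1 : ∀ r : R, T (D.β r) = D.α r
  PH2 : ∀ h : H, mulL T (D.Δ h) = D.β (D.ε (T h))
  T_invol : ∀ h : H, T (T h) = h
  PH3 : ∀ h : H, D.π2 (tau2 D T (D.Δ h)) = D.π2 ((1 : H) ⊗ₜ[k] T h)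

end PreBialgebroid

open Coalgebra in
/-- The convolution `δ * S` for a character `δ`. -/
def twistedAntipode {k 𝓗 : Type} [Field k] [Ring 𝓗] [HopfAlgebra k 𝓗]
    (δ : 𝓗 →ₐ[k] k) : 𝓗 →ₗ[k] 𝓗 :=
  (TensorProduct.lift
    (LinearMap.mk₂ k (fun x y => δ x • HopfAlgebra.antipode (R := k) y)
      (by intro x x' y; simp [map_add, add_smul])
      (by intro c x y; simp [mul_smul])
      (by intro x y y'; simp [map_add, smul_add])
      (by intro c x y; simp only [map_smul]; rw [smul_comm]))) ∘ₗ comul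

open Coalgebra

section DoubleCrossedProduct

variable {k 𝓗 PAlg HH : Type} [Field k] [Ring 𝓗] [HopfAlgebra k 𝓗]
  [Ring PAlg] [Algebra k PAlg] [Ring HH] [Algebra k HH]

/-- The iterated coproduct `Δ² : 𝓗 → 𝓗 ⊗ (𝓗 ⊗ 𝓗)`. -/
def comul2 : 𝓗 →ₗ[k] 𝓗 ⊗[k] (𝓗 ⊗[k] 𝓗) :=
  (LinearMap.lTensor 𝓗 (comul (R := k))) ∘ₗ comul

/-- `a ⊗ b ⊗ c ↦ (P₁ · a(P₂)) ⊗ (b h₂) ⊗ (c(Q₂) Q₁)`, expressing the double crossed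
product multiplication. -/
def dcpMul (ρ : 𝓗 →ₗ[k] PAlg →ₗ[k] PAlg) (P₁ P₂ Q₁ Q₂ : PAlg) (h₂ : 𝓗) :
    𝓗 ⊗[k] (𝓗 ⊗[k] 𝓗) →ₗ[k] PAlg ⊗[k] (𝓗 ⊗[k] PAlg) :=
  TensorProduct.map (LinearMap.mulLeft k P₁ ∘ₗ ρ.flip P₂)
    (TensorProduct.map (LinearMap.mulRight k h₂) (LinearMap.mulRight k Q₁ ∘ₗ ρ.flip Q₂))

/-- The cyclic permutation `u ⊗ (v ⊗ w) ↦ w ⊗ (v ⊗ u)`. -/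
def cyc3 (M N P : Type) [AddCommGroup M] [AddCommGroup N] [AddCommGroup P]
    [Module k M] [Module k N] [Module k P] :
    (M ⊗[k] (N ⊗[k] P)) ≃ₗ[k] (P ⊗[k] (N ⊗[k] M)) :=
  (TensorProduct.congr (LinearEquiv.refl k M) (TensorProduct.comm k N P)).trans <|
    (TensorProduct.assoc k M P N).symm.trans <|
      (TensorProduct.congr (TensorProduct.comm k M P) (LinearEquiv.refl k N)).trans <|
        (TensorProduct.assoc k P M N).trans
          (TensorProduct.congr (LinearEquiv.refl k P) (TensorProduct.comm k M N))

/-- `a ⊗ b ⊗ c ↦ S(c)(Q) ⊗ S(b) ⊗ S̃_δ(a)(P)`, expressing the para-antipode of the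
double crossed product. -/
def dcpT (ρ : 𝓗 →ₗ[k] PAlg →ₗ[k] PAlg) (δ : 𝓗 →ₐ[k] k) (P Q : PAlg) :
    𝓗 ⊗[k] (𝓗 ⊗[k] 𝓗) →ₗ[k] PAlg ⊗[k] (𝓗 ⊗[k] PAlg) :=
  (cyc3 (k := k) PAlg 𝓗 PAlg).toLinearMap ∘ₗ
    TensorProduct.map (ρ.flip P ∘ₗ twistedAntipode δ)
      (TensorProduct.map (HopfAlgebra.antipode (R := k))
        (ρ.flip Q ∘ₗ HopfAlgebra.antipode (R := k)))

/-- `x ⊗ y ↦ (P ⊗ x ⊗ 1) ⊗ (1 ⊗ y ⊗ Q)`, expressing the coproduct of the double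
crossed product via a linear identification `e`. -/
def dcpΔ (e : (PAlg ⊗[k] (𝓗 ⊗[k] PAlg)) ≃ₗ[k] HH) (P Q : PAlg) :
    𝓗 ⊗[k] 𝓗 →ₗ[k] HH ⊗[k] HH :=
  TensorProduct.map
    (e.toLinearMap ∘ₗ TensorProduct.mk k PAlg (𝓗 ⊗[k] PAlg) P ∘ₗ
      (TensorProduct.mk k 𝓗 PAlg).flip 1)
    (e.toLinearMap ∘ₗ TensorProduct.mk k PAlg (𝓗 ⊗[k] PAlg) 1 ∘ₗ
      (TensorProduct.mk k 𝓗 PAlg).flip Q)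

end DoubleCrossedProduct

open TensorProduct Coalgebra HopfAlgebra

namespace Coalgebra

variable {R A M ι : Type*} [CommSemiring R] [AddCommMonoid A] [Module R A] [Coalgebra R A]
  [AddCommMonoid M] [Module R M] {a : A}

lemma sum_counit_smul_map (r : Repr R a ι) (f : A →ₗ[R] M) :
    ∑ i ∈ r.index, counit (R := R) (r.left i) • f (r.right i) = f a := by
  simp only [← map_smul, ← map_sum, sum_counit_smul]

lemma sum_smul_counit_map (r : Repr R a ι) (f : A →ₗ[R] M) :
    ∑ i ∈ r.index, counit (R := R) (r.right i) • f (r.left i) = f a := by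
  simpa only [map_sum, LinearMap.rTensor_tmul, _root_.TensorProduct.rid_tmul, one_smul] using
    congr(_root_.TensorProduct.rid R M (f.rTensor R $(sum_tmul_counit_eq r)))

lemma sum_apply_tmul_tmul_eq (Φ : A ⊗[R] (A ⊗[R] A) →ₗ[R] M) (r : Repr R a ι)
    {κ Λ : ι → Type*} (a₁ : (i : ι) → Repr R (r.left i) (κ i))
    (a₂ : (i : ι) → Repr R (r.right i) (Λ i)) :
    ∑ i ∈ r.index, ∑ j ∈ (a₁ i).index, Φ ((a₁ i).left j ⊗ₜ ((a₁ i).right j ⊗ₜ r.right i)) =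
      ∑ i ∈ r.index, ∑ j ∈ (a₂ i).index, Φ (r.left i ⊗ₜ ((a₂ i).left j ⊗ₜ (a₂ i).right j)) := by
  simpa only [map_sum] using congr(Φ $(sum_tmul_tmul_eq r a₁ a₂))

end Coalgebra

namespace HopfAlgebra

variable {R A ι : Type*} [CommSemiring R] [Semiring A] [HopfAlgebra R A]

lemma sum_antipode_tmul_one_mul_comul {a : A} (r : Repr R a ι) :
    ∑ i ∈ r.index, (antipode R (r.left i) ⊗ₜ[R] (1 : A)) * comul (r.right i) = 1 ⊗ₜ a := by
  let Φ : A ⊗[R] (A ⊗[R] A) →ₗ[R] A ⊗[R] A :=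
    (LinearMap.mul' R A ∘ₗ (antipode R).rTensor A).rTensor A ∘ₗ
      (TensorProduct.assoc R A A A).symm.toLinearMap
  have hΦ (x y z : A) : Φ (x ⊗ₜ (y ⊗ₜ z)) = (antipode R x * y) ⊗ₜ z := by simp [Φ]
  calc _ = ∑ i ∈ r.index, ∑ j ∈ (ℛ R (r.right i)).index,
        Φ (r.left i ⊗ₜ ((ℛ R (r.right i)).left j ⊗ₜ (ℛ R (r.right i)).right j)) := by
        refine Finset.sum_congr rfl fun i _ ↦ ?_
        simp [← (ℛ R (r.right i)).eq, Finset.mul_sum, hΦ]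
    _ = ∑ i ∈ r.index, ∑ j ∈ (ℛ R (r.left i)).index,
        Φ ((ℛ R (r.left i)).left j ⊗ₜ ((ℛ R (r.left i)).right j ⊗ₜ r.right i)) :=
      (sum_apply_tmul_tmul_eq Φ r _ _).symm
    _ = ∑ i ∈ r.index, counit (R := R) (r.left i) • ((1 : A) ⊗ₜ r.right i) := by
        simp only [hΦ, ← sum_tmul, sum_antipode_mul_eq_smul, smul_tmul, tmul_smul]
    _ = 1 ⊗ₜ a := sum_counit_smul_map r (TensorProduct.mk R A A 1)

open WithConv in
variable (R) in
lemma comul_antipode (a : A) :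
    comul (antipode R a) =
      TensorProduct.comm R A A (TensorProduct.map (antipode R) (antipode R) (comul a)) := by
  let G : A →ₗ[R] A ⊗[R] A :=
    (TensorProduct.comm R A A).toLinearMap ∘ₗ TensorProduct.map (antipode R) (antipode R) ∘ₗ comul
  have hG : toConv G * toConv comul = 1 := by
    ext c
    let Ψ : A ⊗[R] (A ⊗[R] A) →ₗ[R] A ⊗[R] A :=
      LinearMap.mul' R (A ⊗[R] A) ∘ₗ
        TensorProduct.map ((TensorProduct.comm R A A).toLinearMap ∘ₗ map (antipode R) (antipode R))
          comul ∘ₗ (TensorProduct.assoc R A A A).symm.toLinearMap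
    have hΨ (x y z : A) : Ψ (x ⊗ₜ (y ⊗ₜ z)) =
        (1 ⊗ₜ antipode R x) * ((antipode R y ⊗ₜ 1) * comul z) := by
      simp [Ψ, ← mul_assoc]
    set r := ℛ R c
    calc _
        = ∑ i ∈ r.index, ∑ j ∈ (ℛ R (r.left i)).index,
            Ψ ((ℛ R (r.left i)).left j ⊗ₜ ((ℛ R (r.left i)).right j ⊗ₜ r.right i)) := by
          rw [r.convMul_apply]
          refine Finset.sum_congr rfl fun i _ ↦ ?_
          simp [G, Ψ, ← (ℛ R (r.left i)).eq, Finset.sum_mul]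
      _ = ∑ i ∈ r.index, ∑ j ∈ (ℛ R (r.right i)).index,
            Ψ (r.left i ⊗ₜ ((ℛ R (r.right i)).left j ⊗ₜ (ℛ R (r.right i)).right j)) :=
          sum_apply_tmul_tmul_eq Ψ r _ _
      _ = ∑ i ∈ r.index, (1 : A) ⊗ₜ (antipode R (r.left i) * r.right i) := by
          simp only [hΨ, ← Finset.mul_sum, sum_antipode_tmul_one_mul_comul,
            Algebra.TensorProduct.tmul_mul_tmul, one_mul]
      _ = _ := by
          simp [← tmul_sum, sum_antipode_mul_eq_smul, Algebra.TensorProduct.one_def,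
            Algebra.algebraMap_eq_smul_one]
  exact congr($(left_inv_eq_right_inv hG LinearMap.comul_right_inv).ofConv a).symm

@[simps]
def _root_.Coalgebra.Repr.antipode {a : A} (r : Repr R a ι) : Repr R (antipode R a) ι where
  index := r.index
  left i := HopfAlgebra.antipode R (r.right i)
  right i := HopfAlgebra.antipode R (r.left i)
  eq := by simp [comul_antipode, ← r.eq, map_sum]

end HopfAlgebra

namespace PreBialgebroid

variable {k H R : Type} [Field k] [Ring H] [Algebra k H] [Ring R] [Algebra k R]
  (D : PreBialgebroid k H R)

lemma π2_eq_iff {u v : H ⊗[k] H} : D.π2 u = D.π2 v ↔ u - v ∈ D.rel2 :=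
  Submodule.Quotient.eq _

lemma π2_eq_zero_iff {u : H ⊗[k] H} : D.π2 u = 0 ↔ u ∈ D.rel2 :=
  Submodule.Quotient.mk_eq_zero _

lemma rel2_generator_eq (r : R) (x y : H) :
    (D.β r * x) ⊗ₜ[k] y - x ⊗ₜ[k] (D.α r * y) =
      (D.β r ⊗ₜ[k] (1 : H) - (1 : H) ⊗ₜ[k] D.α r) * (x ⊗ₜ[k] y) := by
  simp [sub_mul]

lemma mul_mem_rel2 {z : H ⊗[k] H} (hz : z ∈ D.rel2) (w : H ⊗[k] H) : z * w ∈ D.rel2 := by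
  induction hz using Submodule.span_induction with
  | mem _ hx =>
    obtain ⟨r, x, y, rfl⟩ := hx
    induction w with
    | zero => simp
    | add u v hu hv => rw [mul_add]; exact add_mem hu hv
    | tmul u v =>
      refine Submodule.subset_span ⟨r, x * u, y * v, ?_⟩
      simp [sub_mul, mul_assoc]
  | zero => simp
  | add u v _ _ hu hv => rw [add_mul]; exact add_mem hu hv
  | smul c u _ hu => rw [smul_mul_assoc]; exact Submodule.smul_mem _ c hu

lemma α_tmul_one_mul_mem_rel2 (r : R) {z : H ⊗[k] H} (hz : z ∈ D.rel2) :
    (D.α r ⊗ₜ[k] (1 : H)) * z ∈ D.rel2 := by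
  induction hz using Submodule.span_induction with
  | mem _ hx =>
    obtain ⟨s, x, y, rfl⟩ := hx
    refine Submodule.subset_span ⟨s, D.α r * x, y, ?_⟩
    simp [mul_sub, ← mul_assoc, D.αβ_comm]
  | zero => simp
  | add u v _ _ hu hv => rw [mul_add]; exact add_mem hu hv
  | smul c u _ hu => rw [mul_smul_comm]; exact Submodule.smul_mem _ c hu

lemma π2_mul_right {u v : H ⊗[k] H} (h : D.π2 u = D.π2 v) (w : H ⊗[k] H) :
    D.π2 (u * w) = D.π2 (v * w) := by
  rw [π2_eq_iff] at h ⊢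
  simpa [sub_mul] using D.mul_mem_rel2 h w

lemma π2_β_tmul (r : R) (v : H) :
    D.π2 (D.β r ⊗ₜ[k] v) = D.π2 ((1 : H) ⊗ₜ[k] (D.α r * v)) :=
  D.π2_eq_iff.2 <| Submodule.subset_span ⟨r, 1, v, by rw [mul_one]⟩

lemma tau2_tmul (T : H →ₗ[k] H) (x y : H) :
    tau2 D T (x ⊗ₜ[k] y) = D.Δ (T x) * (y ⊗ₜ[k] (1 : H)) := by
  simp [tau2]

namespace IsBialgebroid

variable {D} (hD : D.IsBialgebroid)
include hD

/-- The Takeuchi condition `Δ_cp3` makes left multiplication by `Δ u` well defined on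
`H ⊗_R H`. -/
lemma Δ_mul_mem_rel2 (u : H) {z : H ⊗[k] H} (hz : z ∈ D.rel2) : D.Δ u * z ∈ D.rel2 := by
  induction hz using Submodule.span_induction with
  | mem _ hx =>
    obtain ⟨r, x, y, rfl⟩ := hx
    rw [rel2_generator_eq, ← mul_assoc]
    exact D.mul_mem_rel2 ((π2_eq_zero_iff D).1 (hD.Δ_cp3 u r)) _
  | zero => simp
  | add u v _ _ hu hv => rw [mul_add]; exact add_mem hu hv
  | smul c u _ hu => rw [mul_smul_comm]; exact Submodule.smul_mem _ c hu

lemma π2_Δ_mul_α_mul (u : H) (r : R) (w : H ⊗[k] H) :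
    D.π2 (D.Δ (u * D.α r) * w) = D.π2 (D.Δ u * ((D.α r ⊗ₜ[k] (1 : H)) * w)) := by
  have hα : D.Δ (D.α r) - (D.α r ⊗ₜ[k] (1 : H)) ∈ D.rel2 := by
    have h₁ := (π2_eq_iff D).1 (by simpa using hD.Δ_left r 1)
    have h₂ := D.α_tmul_one_mul_mem_rel2 r ((π2_eq_iff D).1 hD.Δ_one)
    simpa [mul_sub] using add_mem h₁ h₂
  rw [D.π2_mul_right (hD.Δ_mul u (D.α r)) w, π2_eq_iff, mul_assoc, ← mul_sub, ← sub_mul]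
  exact hD.Δ_mul_mem_rel2 u (D.mul_mem_rel2 hα w)

lemma π2_tau2_eq_zero {T : H →ₗ[k] H} (hT : ∀ r x, T (D.β r * x) = T x * D.α r)
    {z : H ⊗[k] H} (hz : z ∈ D.rel2) : D.π2 (tau2 D T z) = 0 := by
  induction hz using Submodule.span_induction with
  | mem _ hx =>
    obtain ⟨r, x, y, rfl⟩ := hx
    rw [map_sub, tau2_tmul, tau2_tmul, hT, map_sub, sub_eq_zero, hD.π2_Δ_mul_α_mul,
      Algebra.TensorProduct.tmul_mul_tmul, one_mul]
  | zero => simp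
  | add u v _ _ hu hv => rw [map_add, map_add, hu, hv, add_zero]
  | smul c u _ hu => rw [map_smul, map_smul, hu, smul_zero]

lemma π2_tau2_congr {T : H →ₗ[k] H} (hT : ∀ r x, T (D.β r * x) = T x * D.α r)
    {u v : H ⊗[k] H} (h : D.π2 u = D.π2 v) : D.π2 (tau2 D T u) = D.π2 (tau2 D T v) := by
  rw [← sub_eq_zero, ← map_sub, ← map_sub]
  exact hD.π2_tau2_eq_zero hT ((π2_eq_iff D).1 h)

end IsBialgebroid

end PreBialgebroid

section DoubleCrossedProduct

variable {k 𝓗 PAlg HH ι : Type} {κ : ι → Type} [Field k] [Ring 𝓗] [HopfAlgebra k 𝓗]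
  [Ring PAlg] [Algebra k PAlg] [Ring HH] [Algebra k HH]
  {ρ : 𝓗 →ₗ[k] PAlg →ₗ[k] PAlg} {e : PAlg ⊗[k] (𝓗 ⊗[k] PAlg) ≃ₗ[k] HH}
  (hemul : ∀ (P₁ P₂ Q₁ Q₂ : PAlg) (h₁ h₂ : 𝓗),
    e (P₁ ⊗ₜ[k] (h₁ ⊗ₜ[k] Q₁)) * e (P₂ ⊗ₜ[k] (h₂ ⊗ₜ[k] Q₂)) =
      e (dcpMul ρ P₁ P₂ Q₁ Q₂ h₂ (comul2 h₁)))
  (hρ1 : ∀ p : PAlg, ρ 1 p = p)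
  (hρalg1 : ∀ h : 𝓗, ρ h (1 : PAlg) = counit (R := k) h • (1 : PAlg))

lemma comul2_eq_sum {h : 𝓗} (r : Repr k h ι) (s : (i : ι) → Repr k (r.right i) (κ i)) :
    comul2 (k := k) h =
      ∑ i ∈ r.index, ∑ j ∈ (s i).index, r.left i ⊗ₜ ((s i).left j ⊗ₜ (s i).right j) := by
  simp [comul2, ← r.eq, ← (s _).eq, tmul_sum]

lemma comul2_one : comul2 (k := k) (1 : 𝓗) = 1 ⊗ₜ (1 ⊗ₜ 1) := by
  simp [comul2, Algebra.TensorProduct.one_def]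

def dcpMiddle (e : PAlg ⊗[k] (𝓗 ⊗[k] PAlg) ≃ₗ[k] HH) (P Q : PAlg) : 𝓗 →ₗ[k] HH :=
  e.toLinearMap ∘ₗ TensorProduct.mk k PAlg (𝓗 ⊗[k] PAlg) P ∘ₗ (TensorProduct.mk k 𝓗 PAlg).flip Q

@[simp]
lemma dcpMiddle_apply (P Q : PAlg) (h : 𝓗) : dcpMiddle e P Q h = e (P ⊗ₜ (h ⊗ₜ Q)) := rfl

include hemul in
lemma dcp_mul_dcp {h₁ : 𝓗} (P₁ Q₁ P₂ Q₂ : PAlg) (h₂ : 𝓗) (r : Repr k h₁ ι)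
    (s : (i : ι) → Repr k (r.right i) (κ i)) :
    e (P₁ ⊗ₜ (h₁ ⊗ₜ Q₁)) * e (P₂ ⊗ₜ (h₂ ⊗ₜ Q₂)) =
      ∑ i ∈ r.index, ∑ j ∈ (s i).index,
        e ((P₁ * ρ (r.left i) P₂) ⊗ₜ (((s i).left j * h₂) ⊗ₜ (ρ ((s i).right j) Q₂ * Q₁))) := by
  simp [hemul, comul2_eq_sum r s, dcpMul]

include hemul hρ1 in
lemma dcp_one_mul_dcp (P₁ Q₁ P₂ Q₂ : PAlg) (h : 𝓗) :
    e (P₁ ⊗ₜ ((1 : 𝓗) ⊗ₜ Q₁)) * e (P₂ ⊗ₜ (h ⊗ₜ Q₂)) = e ((P₁ * P₂) ⊗ₜ (h ⊗ₜ (Q₂ * Q₁))) := by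
  simp [hemul, comul2_one, dcpMul, hρ1]

include hemul hρalg1 in
lemma dcp_mul_dcp_one_one {b : 𝓗} (A C p : PAlg) (r : Repr k b ι) :
    e (A ⊗ₜ (b ⊗ₜ C)) * e (p ⊗ₜ ((1 : 𝓗) ⊗ₜ (1 : PAlg))) =
      ∑ i ∈ r.index, e ((A * ρ (r.left i) p) ⊗ₜ (r.right i ⊗ₜ C)) := by
  rw [dcp_mul_dcp hemul _ _ _ _ _ r fun i ↦ ℛ k (r.right i)]
  refine Finset.sum_congr rfl fun i _ ↦ ?_
  simpa [hρalg1, smul_mul_assoc, tmul_smul] using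
    sum_smul_counit_map (ℛ k (r.right i)) (dcpMiddle e (A * ρ (r.left i) p) C)

include hemul hρalg1 in
lemma dcp_right_one_mul_left_one_dcp {u : 𝓗} (P Q : PAlg) (b : 𝓗) (r : Repr k u ι) :
    e (P ⊗ₜ (u ⊗ₜ (1 : PAlg))) * e ((1 : PAlg) ⊗ₜ (b ⊗ₜ Q)) =
      ∑ i ∈ r.index, e (P ⊗ₜ ((r.left i * b) ⊗ₜ ρ (r.right i) Q)) := by
  let L : 𝓗 ⊗[k] 𝓗 →ₗ[k] HH := e.toLinearMap ∘ₗ TensorProduct.mk k PAlg (𝓗 ⊗[k] PAlg) P ∘ₗ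
    TensorProduct.map (LinearMap.mulRight k b) (ρ.flip Q)
  have hL (x y : 𝓗) : L (x ⊗ₜ y) = e (P ⊗ₜ ((x * b) ⊗ₜ ρ y Q)) := rfl
  calc _ = ∑ i ∈ r.index, counit (R := k) (r.left i) • (L ∘ₗ comul) (r.right i) := by
        rw [dcp_mul_dcp hemul _ _ _ _ _ r fun i ↦ ℛ k (r.right i)]
        refine Finset.sum_congr rfl fun i _ ↦ ?_
        simp [hρalg1, ← (ℛ k (r.right i)).eq, Finset.smul_sum, hL, ← smul_tmul']
    _ = ∑ i ∈ r.index, L (r.left i ⊗ₜ r.right i) := by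
        rw [sum_counit_smul_map r, LinearMap.comp_apply, ← r.eq, map_sum]
    _ = _ := Finset.sum_congr rfl fun i _ ↦ hL _ _

include hemul hρalg1 in
lemma sum_dcp_antipode_mul_dcp {w : 𝓗} (Q : PAlg) (r : Repr k w ι) :
    ∑ i ∈ r.index, e ((1 : PAlg) ⊗ₜ (antipode k (r.left i) ⊗ₜ (1 : PAlg))) *
        e ((1 : PAlg) ⊗ₜ (r.right i ⊗ₜ Q)) =
      e ((1 : PAlg) ⊗ₜ ((1 : 𝓗) ⊗ₜ ρ (antipode k w) Q)) := by
  let Φ : 𝓗 ⊗[k] (𝓗 ⊗[k] 𝓗) →ₗ[k] HH :=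
    e.toLinearMap ∘ₗ TensorProduct.mk k PAlg (𝓗 ⊗[k] PAlg) 1 ∘ₗ
      TensorProduct.map (LinearMap.mul' k 𝓗 ∘ₗ (antipode k).rTensor 𝓗) (ρ.flip Q ∘ₗ antipode k) ∘ₗ
      (TensorProduct.comm k 𝓗 (𝓗 ⊗[k] 𝓗)).toLinearMap
  have hΦ (x y z : 𝓗) :
      Φ (x ⊗ₜ (y ⊗ₜ z)) = e (1 ⊗ₜ ((antipode k y * z) ⊗ₜ ρ (antipode k x) Q)) := by
    simp [Φ]
  calc _ = ∑ i ∈ r.index, ∑ j ∈ (ℛ k (r.left i)).index,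
        Φ ((ℛ k (r.left i)).left j ⊗ₜ ((ℛ k (r.left i)).right j ⊗ₜ r.right i)) := by
        refine Finset.sum_congr rfl fun i _ ↦ ?_
        rw [dcp_right_one_mul_left_one_dcp hemul hρalg1 _ _ _ (ℛ k (r.left i)).antipode]
        simp [hΦ]
    _ = ∑ i ∈ r.index, ∑ j ∈ (ℛ k (r.right i)).index,
        Φ (r.left i ⊗ₜ ((ℛ k (r.right i)).left j ⊗ₜ (ℛ k (r.right i)).right j)) :=
      sum_apply_tmul_tmul_eq Φ r _ _
    _ = ∑ i ∈ r.index, counit (R := k) (r.right i) •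
        e ((1 : PAlg) ⊗ₜ ((1 : 𝓗) ⊗ₜ ρ (antipode k (r.left i)) Q)) := by
        refine Finset.sum_congr rfl fun i _ ↦ ?_
        simp only [hΦ, ← dcpMiddle_apply, ← map_sum, sum_antipode_mul_eq_smul, map_smul]
    _ = _ := by
        simpa using sum_smul_counit_map r (e.toLinearMap ∘ₗ TensorProduct.mk k PAlg _ 1 ∘ₗ
          TensorProduct.mk k 𝓗 PAlg 1 ∘ₗ ρ.flip Q ∘ₗ antipode k)

include hemul hρ1 hρalg1 in
/-- Associativity of the double crossed product forces the module-algebra property: compare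
`((1 ⋊ g ⋉ 1) p) q` with `(1 ⋊ g ⋉ 1)(p q)` and contract the middle leg with the counit. -/
lemma act_mul_eq_sum [Nontrivial PAlg] {g : 𝓗} (p q : PAlg) (r : Repr k g ι) :
    ρ g (p * q) = ∑ i ∈ r.index, ρ (r.left i) p * ρ (r.right i) q := by
  let Λ : HH →ₗ[k] PAlg ⊗[k] PAlg := TensorProduct.map LinearMap.id
    ((TensorProduct.lid k PAlg).toLinearMap ∘ₗ counit.rTensor PAlg) ∘ₗ e.symm.toLinearMap
  have hΛ (x : PAlg) (h : 𝓗) (y : PAlg) : Λ (e (x ⊗ₜ (h ⊗ₜ y))) = counit (R := k) h • (x ⊗ₜ y) := by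
    simp [Λ, tmul_smul]
  have lhs : e ((1 : PAlg) ⊗ₜ (g ⊗ₜ (1 : PAlg))) * e (p ⊗ₜ ((1 : 𝓗) ⊗ₜ (1 : PAlg))) *
      e (q ⊗ₜ ((1 : 𝓗) ⊗ₜ (1 : PAlg))) = ∑ i ∈ r.index, ∑ j ∈ (ℛ k (r.right i)).index,
        e ((ρ (r.left i) p * ρ ((ℛ k (r.right i)).left j) q) ⊗ₜ
          ((ℛ k (r.right i)).right j ⊗ₜ (1 : PAlg))) := by
    simp only [dcp_mul_dcp_one_one hemul hρalg1 _ _ _ r, Finset.sum_mul, one_mul,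
      dcp_mul_dcp_one_one hemul hρalg1 _ _ _ (ℛ k (r.right _))]
  have rhs : e ((1 : PAlg) ⊗ₜ (g ⊗ₜ (1 : PAlg))) * (e (p ⊗ₜ ((1 : 𝓗) ⊗ₜ (1 : PAlg))) *
      e (q ⊗ₜ ((1 : 𝓗) ⊗ₜ (1 : PAlg)))) =
        ∑ i ∈ r.index, e (ρ (r.left i) (p * q) ⊗ₜ (r.right i ⊗ₜ (1 : PAlg))) := by
    simp only [dcp_one_mul_dcp hemul hρ1, mul_one, dcp_mul_dcp_one_one hemul hρalg1 _ _ _ r,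
      one_mul]
  have hassoc := congr(Λ $((lhs.symm.trans (mul_assoc _ _ _)).trans rhs))
  simp only [map_sum, hΛ] at hassoc
  have hR : ∑ i ∈ r.index, counit (R := k) (r.right i) • (ρ (r.left i) (p * q) ⊗ₜ[k] (1 : PAlg))
      = ρ g (p * q) ⊗ₜ 1 := by
    simpa using sum_smul_counit_map r ((TensorProduct.mk k PAlg PAlg).flip 1 ∘ₗ ρ.flip (p * q))
  have hL (i : ι) : ∑ j ∈ (ℛ k (r.right i)).index, counit (R := k) ((ℛ k (r.right i)).right j) •
      ((ρ (r.left i) p * ρ ((ℛ k (r.right i)).left j) q) ⊗ₜ[k] (1 : PAlg)) =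
        (ρ (r.left i) p * ρ (r.right i) q) ⊗ₜ 1 := by
    simpa using sum_smul_counit_map (ℛ k (r.right i))
      ((TensorProduct.mk k PAlg PAlg).flip 1 ∘ₗ LinearMap.mulLeft k (ρ (r.left i) p) ∘ₗ ρ.flip q)
  rw [hR, Finset.sum_congr rfl fun i _ ↦ hL i] at hassoc
  apply Algebra.TensorProduct.includeLeft_injective (S := k) (algebraMap k PAlg).injective
  simpa [sum_tmul] using hassoc.symm

include hemul hρ1 hρalg1 in
lemma sum_dcp_antipode_act_mul [Nontrivial PAlg] {w : 𝓗} (Q r C : PAlg) (s : Repr k w ι) :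
    ∑ j ∈ s.index, e (ρ (antipode k (s.right j)) (Q * r) ⊗ₜ (antipode k (s.left j) ⊗ₜ C)) =
      (∑ j ∈ s.index, e (ρ (antipode k (s.right j)) Q ⊗ₜ (antipode k (s.left j) ⊗ₜ C))) *
        e (r ⊗ₜ ((1 : 𝓗) ⊗ₜ (1 : PAlg))) := by
  rw [Finset.sum_mul]
  let Φ : 𝓗 ⊗[k] (𝓗 ⊗[k] 𝓗) →ₗ[k] HH :=
    e.toLinearMap ∘ₗ (TensorProduct.comm k (𝓗 ⊗[k] PAlg) PAlg).toLinearMap ∘ₗ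
      TensorProduct.map ((TensorProduct.mk k 𝓗 PAlg).flip C ∘ₗ antipode k)
        (LinearMap.mul' k PAlg ∘ₗ TensorProduct.map (ρ.flip Q ∘ₗ antipode k)
          (ρ.flip r ∘ₗ antipode k) ∘ₗ (TensorProduct.comm k 𝓗 𝓗).toLinearMap)
  have hΦ (x y z : 𝓗) : Φ (x ⊗ₜ (y ⊗ₜ z)) =
      e ((ρ (antipode k z) Q * ρ (antipode k y) r) ⊗ₜ (antipode k x ⊗ₜ C)) := by
    simp [Φ]
  calc _ = ∑ j ∈ s.index, ∑ m ∈ (ℛ k (s.right j)).index,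
        Φ (s.left j ⊗ₜ ((ℛ k (s.right j)).left m ⊗ₜ (ℛ k (s.right j)).right m)) := by
        refine Finset.sum_congr rfl fun j _ ↦ ?_
        rw [act_mul_eq_sum hemul hρ1 hρalg1 Q r (ℛ k (s.right j)).antipode]
        simp [hΦ, sum_tmul]
    _ = ∑ j ∈ s.index, ∑ m ∈ (ℛ k (s.left j)).index,
        Φ ((ℛ k (s.left j)).left m ⊗ₜ ((ℛ k (s.left j)).right m ⊗ₜ s.right j)) :=
      (sum_apply_tmul_tmul_eq Φ s _ _).symm
    _ = ∑ j ∈ s.index, e (ρ (antipode k (s.right j)) Q ⊗ₜ (antipode k (s.left j) ⊗ₜ C)) *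
          e (r ⊗ₜ ((1 : 𝓗) ⊗ₜ (1 : PAlg))) := by
        refine Finset.sum_congr rfl fun j _ ↦ ?_
        rw [dcp_mul_dcp_one_one hemul hρalg1 _ _ _ (ℛ k (s.left j)).antipode]
        simp [hΦ]

variable {δ : 𝓗 →ₐ[k] k} {T : HH →ₗ[k] HH}
  (hT : ∀ (P Q : PAlg) (h : 𝓗), T (e (P ⊗ₜ[k] (h ⊗ₜ[k] Q))) = e (dcpT ρ δ P Q (comul2 h)))

include hT in
lemma T_dcp_eq_sum {h : 𝓗} (P Q : PAlg) (r : Repr k h ι)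
    (s : (i : ι) → Repr k (r.right i) (κ i)) :
    T (e (P ⊗ₜ (h ⊗ₜ Q))) = ∑ i ∈ r.index, ∑ j ∈ (s i).index,
      e (ρ (antipode k ((s i).right j)) Q ⊗ₜ
        (antipode k ((s i).left j) ⊗ₜ ρ (twistedAntipode δ (r.left i)) P)) := by
  simp [hT, comul2_eq_sum r s, dcpT, cyc3]

include hT hρalg1 in
lemma T_dcp_tmul_one {a : 𝓗} (P : PAlg) (r : Repr k a ι) :
    T (e (P ⊗ₜ (a ⊗ₜ (1 : PAlg)))) =
      ∑ i ∈ r.index, e (1 ⊗ₜ (antipode k (r.right i) ⊗ₜ ρ (twistedAntipode δ (r.left i)) P)) := by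
  rw [T_dcp_eq_sum hT P 1 r fun i ↦ ℛ k (r.right i)]
  refine Finset.sum_congr rfl fun i _ ↦ ?_
  simpa [hρalg1, ← smul_tmul'] using sum_smul_counit_map (ℛ k (r.right i))
    (dcpMiddle e 1 (ρ (twistedAntipode δ (r.left i)) P) ∘ₗ antipode k)

variable {D : PreBialgebroid k HH PAlg}
  (hΔ : ∀ (P Q : PAlg) (h : 𝓗),
    D.π2 (D.Δ (e (P ⊗ₜ[k] (h ⊗ₜ[k] Q)))) = D.π2 (dcpΔ e P Q (comul h)))

lemma dcpΔ_comul {h : 𝓗} (P Q : PAlg) (r : Repr k h ι) :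
    dcpΔ e P Q (comul h) =
      ∑ i ∈ r.index, e (P ⊗ₜ (r.left i ⊗ₜ (1 : PAlg))) ⊗ₜ e (1 ⊗ₜ (r.right i ⊗ₜ Q)) := by
  simp [dcpΔ, ← r.eq]

include hΔ in
lemma π2_Δ_dcp {h : 𝓗} (P Q : PAlg) (r : Repr k h ι) :
    D.π2 (D.Δ (e (P ⊗ₜ (h ⊗ₜ Q)))) =
      D.π2 (∑ i ∈ r.index, e (P ⊗ₜ (r.left i ⊗ₜ (1 : PAlg))) ⊗ₜ e (1 ⊗ₜ (r.right i ⊗ₜ Q))) := by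
  rw [hΔ, dcpΔ_comul P Q r]

variable (hα : ∀ P : PAlg, D.α P = e (P ⊗ₜ[k] ((1 : 𝓗) ⊗ₜ[k] (1 : PAlg))))
  (hβ : ∀ Q : PAlg, D.β Q = e ((1 : PAlg) ⊗ₜ[k] ((1 : 𝓗) ⊗ₜ[k] Q)))

include hemul hρ1 hρalg1 hT hα hβ in
lemma T_β_mul (r : PAlg) (x : HH) : T (D.β r * x) = T x * D.α r := by
  rcases subsingleton_or_nontrivial PAlg with hP | hP
  · have : Subsingleton HH := e.symm.injective.subsingleton
    exact Subsingleton.elim _ _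
  obtain ⟨w, rfl⟩ := e.surjective x
  suffices (T ∘ₗ LinearMap.mulLeft k (D.β r)) ∘ₗ e.toLinearMap =
      (LinearMap.mulRight k (D.α r) ∘ₗ T) ∘ₗ e.toLinearMap from congr($this w)
  refine TensorProduct.ext_threefold' fun P g Q ↦ ?_
  simp only [LinearMap.comp_apply, LinearEquiv.coe_coe, LinearMap.mulLeft_apply,
    LinearMap.mulRight_apply, hα, hβ]
  rw [dcp_one_mul_dcp hemul hρ1, one_mul, T_dcp_eq_sum hT _ _ (ℛ k g) fun i ↦ ℛ k _,
    T_dcp_eq_sum hT _ _ (ℛ k g) fun i ↦ ℛ k _, Finset.sum_mul]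
  exact Finset.sum_congr rfl fun i _ ↦ sum_dcp_antipode_act_mul hemul hρ1 hρalg1 Q r _ _

include hemul hρ1 hρalg1 hα hβ hΔ in
lemma sum_π2_tau2_dcp_antipode {w : 𝓗} (C Q : PAlg) (s : Repr k w ι) :
    ∑ j ∈ s.index, D.π2 (D.tau2 LinearMap.id
        (e ((1 : PAlg) ⊗ₜ (antipode k (s.left j) ⊗ₜ C)) ⊗ₜ e ((1 : PAlg) ⊗ₜ (s.right j ⊗ₜ Q)))) =
      D.π2 ((1 : HH) ⊗ₜ
        ∑ j ∈ s.index, e (ρ (antipode k (s.right j)) Q ⊗ₜ (antipode k (s.left j) ⊗ₜ C))) := by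
  let Φ : 𝓗 ⊗[k] (𝓗 ⊗[k] 𝓗) →ₗ[k] HH ⊗[k] HH :=
    (TensorProduct.comm k HH HH).toLinearMap ∘ₗ
      TensorProduct.map (dcpMiddle e 1 C ∘ₗ antipode k)
        (LinearMap.mul' k HH ∘ₗ TensorProduct.map (dcpMiddle e 1 1 ∘ₗ antipode k) (dcpMiddle e 1 Q))
  have hΦ (x y z : 𝓗) : Φ (x ⊗ₜ (y ⊗ₜ z)) =
      (e ((1 : PAlg) ⊗ₜ (antipode k y ⊗ₜ (1 : PAlg))) * e ((1 : PAlg) ⊗ₜ (z ⊗ₜ Q))) ⊗ₜ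
        e ((1 : PAlg) ⊗ₜ (antipode k x ⊗ₜ C)) := by
    simp [Φ]
  calc _ = D.π2 (∑ j ∈ s.index, ∑ m ∈ (ℛ k (s.left j)).index,
        Φ ((ℛ k (s.left j)).left m ⊗ₜ ((ℛ k (s.left j)).right m ⊗ₜ s.right j))) := by
        rw [map_sum]
        refine Finset.sum_congr rfl fun j _ ↦ ?_
        rw [D.tau2_tmul, LinearMap.id_apply,
          D.π2_mul_right (π2_Δ_dcp hΔ 1 C (ℛ k (s.left j)).antipode)]
        simp [Finset.sum_mul, hΦ]
    _ = D.π2 (∑ j ∈ s.index, ∑ m ∈ (ℛ k (s.right j)).index,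
        Φ (s.left j ⊗ₜ ((ℛ k (s.right j)).left m ⊗ₜ (ℛ k (s.right j)).right m))) := by
        rw [sum_apply_tmul_tmul_eq Φ s]
    _ = ∑ j ∈ s.index, D.π2 (D.β (ρ (antipode k (s.right j)) Q) ⊗ₜ
          e ((1 : PAlg) ⊗ₜ (antipode k (s.left j) ⊗ₜ C))) := by
        rw [map_sum]
        refine Finset.sum_congr rfl fun j _ ↦ ?_
        simp only [hΦ, ← sum_tmul, sum_dcp_antipode_mul_dcp hemul hρalg1, hβ]
    _ = _ := by
        rw [tmul_sum, map_sum]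
        refine Finset.sum_congr rfl fun j _ ↦ ?_
        rw [D.π2_β_tmul, hα, dcp_one_mul_dcp hemul hρ1, mul_one, mul_one]

include hemul hρ1 hρalg1 hT hα hβ hΔ in
lemma π2_tau2_dcpΔ_comul (P Q : PAlg) (h : 𝓗) :
    D.π2 (D.tau2 T (dcpΔ e P Q (comul h))) = D.π2 ((1 : HH) ⊗ₜ T (e (P ⊗ₜ (h ⊗ₜ Q)))) := by
  set r := ℛ k h
  let Φ : 𝓗 ⊗[k] (𝓗 ⊗[k] 𝓗) →ₗ[k] (HH ⊗[k] HH) ⧸ D.rel2 :=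
    D.π2 ∘ₗ D.tau2 LinearMap.id ∘ₗ TensorProduct.map
      (e.toLinearMap ∘ₗ TensorProduct.mk k PAlg _ 1 ∘ₗ (TensorProduct.comm k PAlg 𝓗).toLinearMap ∘ₗ
        TensorProduct.map (ρ.flip P ∘ₗ twistedAntipode δ) (antipode k))
      (dcpMiddle e 1 Q) ∘ₗ (TensorProduct.assoc k 𝓗 𝓗 𝓗).symm.toLinearMap
  have hΦ (x y z : 𝓗) : Φ (x ⊗ₜ (y ⊗ₜ z)) = D.π2 (D.tau2 LinearMap.id
      (e ((1 : PAlg) ⊗ₜ (antipode k y ⊗ₜ ρ (twistedAntipode δ x) P)) ⊗ₜ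
        e ((1 : PAlg) ⊗ₜ (z ⊗ₜ Q)))) := by
    simp [Φ]
  calc _ = ∑ i ∈ r.index, ∑ j ∈ (ℛ k (r.left i)).index,
        Φ ((ℛ k (r.left i)).left j ⊗ₜ ((ℛ k (r.left i)).right j ⊗ₜ r.right i)) := by
        rw [dcpΔ_comul P Q r, map_sum, map_sum]
        refine Finset.sum_congr rfl fun i _ ↦ ?_
        rw [D.tau2_tmul, T_dcp_tmul_one hρalg1 hT P (ℛ k (r.left i))]
        simp [hΦ, D.tau2_tmul, Finset.sum_mul]
    _ = ∑ i ∈ r.index, ∑ j ∈ (ℛ k (r.right i)).index,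
        Φ (r.left i ⊗ₜ ((ℛ k (r.right i)).left j ⊗ₜ (ℛ k (r.right i)).right j)) :=
      sum_apply_tmul_tmul_eq Φ r _ _
    _ = ∑ i ∈ r.index, D.π2 ((1 : HH) ⊗ₜ ∑ j ∈ (ℛ k (r.right i)).index,
          e (ρ (antipode k ((ℛ k (r.right i)).right j)) Q ⊗ₜ
            (antipode k ((ℛ k (r.right i)).left j) ⊗ₜ ρ (twistedAntipode δ (r.left i)) P))) := by
        refine Finset.sum_congr rfl fun i _ ↦ ?_
        simp only [hΦ]
        exact sum_π2_tau2_dcp_antipode hemul hρ1 hρalg1 hΔ hα hβ _ Q _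
    _ = _ := by rw [T_dcp_eq_sum hT P Q r fun i ↦ ℛ k (r.right i), tmul_sum, map_sum]

end DoubleCrossedProduct

open Coalgebra MulOpposite in
theorem doubleCrossedProduct_cyclic_identity_general
    {k 𝓗 PAlg HH : Type} [Field k] [Ring 𝓗] [HopfAlgebra k 𝓗]
    [Ring PAlg] [Algebra k PAlg] [Ring HH] [Algebra k HH]
    (δ : 𝓗 →ₐ[k] k)
    (ρ : 𝓗 →ₗ[k] PAlg →ₗ[k] PAlg)
    (hρ1 : ∀ p : PAlg, ρ 1 p = p)
    (hρalg1 : ∀ h : 𝓗, ρ h (1 : PAlg) = counit (R := k) h • (1 : PAlg))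
    (e : (PAlg ⊗[k] (𝓗 ⊗[k] PAlg)) ≃ₗ[k] HH)
    (hemul : ∀ (P₁ P₂ Q₁ Q₂ : PAlg) (h₁ h₂ : 𝓗),
      e (P₁ ⊗ₜ[k] (h₁ ⊗ₜ[k] Q₁)) * e (P₂ ⊗ₜ[k] (h₂ ⊗ₜ[k] Q₂)) =
        e (dcpMul ρ P₁ P₂ Q₁ Q₂ h₂ (comul2 h₁)))
    (D : PreBialgebroid k HH PAlg) (hD : D.IsBialgebroid)
    (hα : ∀ P : PAlg, D.α P = e (P ⊗ₜ[k] ((1 : 𝓗) ⊗ₜ[k] (1 : PAlg))))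
    (hβ : ∀ Q : PAlg, D.β Q = e ((1 : PAlg) ⊗ₜ[k] ((1 : 𝓗) ⊗ₜ[k] Q)))
    (hΔ : ∀ (P Q : PAlg) (h : 𝓗),
      D.π2 (D.Δ (e (P ⊗ₜ[k] (h ⊗ₜ[k] Q)))) = D.π2 (dcpΔ e P Q (comul h)))
    (T : HH →ₗ[k] HH)
    (hT : ∀ (P Q : PAlg) (h : 𝓗),
      T (e (P ⊗ₜ[k] (h ⊗ₜ[k] Q))) = e (dcpT ρ δ P Q (comul2 h))) :
    ∀ (P Q : PAlg) (h : 𝓗),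
      D.π2 (PreBialgebroid.tau2 D T (D.Δ (e (P ⊗ₜ[k] (h ⊗ₜ[k] Q))))) =
        D.π2 ((1 : HH) ⊗ₜ[k] T (e (P ⊗ₜ[k] (h ⊗ₜ[k] Q)))) := by
  intro P Q h
  rw [hD.π2_tau2_congr (T_β_mul hemul hρ1 hρalg1 hT hα hβ) (hΔ P Q h)]
  exact π2_tau2_dcpΔ_comul hemul hρ1 hρalg1 hT hΔ hα hβ P Q h

open Coalgebra MulOpposite in
/-- in the double crossed product bialgebroid `H = 𝒫 ⋊ 𝓗 ⋉ 𝒫ᵒᵖ` with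
`T(P⋊h⋉Q) = S(h⁽³⁾)(Q) ⋊ S(h⁽²⁾) ⋉ S̃_δ(h⁽¹⁾)(P)`, the identity
`T(𝔥⁽¹⁾)⁽¹⁾𝔥⁽²⁾ ⊗_𝒫 T(𝔥⁽¹⁾)⁽²⁾ = 1 ⊗_𝒫 T(𝔥)` holds for every `𝔥 = P⋊h⋉Q`. -/
theorem doubleCrossedProduct_cyclic_identity
    {k 𝓗 PAlg HH : Type} [Field k] [Ring 𝓗] [HopfAlgebra k 𝓗]
    [Ring PAlg] [Algebra k PAlg] [Ring HH] [Algebra k HH]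
    (δ : 𝓗 →ₐ[k] k)
    (ρ : 𝓗 →ₗ[k] PAlg →ₗ[k] PAlg)
    (hρ1 : ∀ p : PAlg, ρ 1 p = p)
    (hρmul : ∀ (g h : 𝓗) (p : PAlg), ρ (g * h) p = ρ g (ρ h p))
    (hρalg1 : ∀ h : 𝓗, ρ h (1 : PAlg) = counit (R := k) h • (1 : PAlg))
    (e : (PAlg ⊗[k] (𝓗 ⊗[k] PAlg)) ≃ₗ[k] HH)
    (he1 : e ((1 : PAlg) ⊗ₜ[k] ((1 : 𝓗) ⊗ₜ[k] (1 : PAlg))) = 1)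
    (hemul : ∀ (P₁ P₂ Q₁ Q₂ : PAlg) (h₁ h₂ : 𝓗),
      e (P₁ ⊗ₜ[k] (h₁ ⊗ₜ[k] Q₁)) * e (P₂ ⊗ₜ[k] (h₂ ⊗ₜ[k] Q₂)) =
        e (dcpMul ρ P₁ P₂ Q₁ Q₂ h₂ (comul2 h₁)))
    (D : PreBialgebroid k HH PAlg) (hD : D.IsBialgebroid)
    (hα : ∀ P : PAlg, D.α P = e (P ⊗ₜ[k] ((1 : 𝓗) ⊗ₜ[k] (1 : PAlg))))
    (hβ : ∀ Q : PAlg, D.β Q = e ((1 : PAlg) ⊗ₜ[k] ((1 : 𝓗) ⊗ₜ[k] Q)))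
    (hΔ : ∀ (P Q : PAlg) (h : 𝓗),
      D.π2 (D.Δ (e (P ⊗ₜ[k] (h ⊗ₜ[k] Q)))) = D.π2 (dcpΔ e P Q (comul h)))
    (hε : ∀ (P Q : PAlg) (h : 𝓗),
      D.ε (e (P ⊗ₜ[k] (h ⊗ₜ[k] Q))) = counit (R := k) h • (P * Q))
    (T : HH →ₗ[k] HH)
    (hT : ∀ (P Q : PAlg) (h : 𝓗),
      T (e (P ⊗ₜ[k] (h ⊗ₜ[k] Q))) = e (dcpT ρ δ P Q (comul2 h))) :
    ∀ (P Q : PAlg) (h : 𝓗),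
      D.π2 (PreBialgebroid.tau2 D T (D.Δ (e (P ⊗ₜ[k] (h ⊗ₜ[k] Q))))) =
        D.π2 ((1 : HH) ⊗ₜ[k] T (e (P ⊗ₜ[k] (h ⊗ₜ[k] Q)))) :=
  doubleCrossedProduct_cyclic_identity_general δ ρ hρ1 hρalg1 e hemul D hD hα hβ hΔ T hT
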